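/- Suppose the equation w_{n+1} = e^{-Λ}A_n w_n has an exponential dichotomy on ℤ for every Λ in an open interval (a,b) (a resolvent interval). Then the dichotomy projectors are constant on (a,b): if (P_n^s(Λ₁)) and (P_n^s(Λ₂)) are the dichotomy projector families for Λ₁, Λ₂ ∈ (a,b), then P_n^s(Λ₁) = P_n^s(Λ₂) for all n ∈ ℤ. -/

import Mathlib

/-!
Dichotomy projectors are determined by the system: the range of `P n` is the set of initial values
of forward-bounded solutions and its kernel that of backward-bounded ones. Rescaling a dichotomy
with rates `αs, αu` by `e^{-ε(n-m)}`, `|ε| < min αs αu`, gives a dichotomy with the same projectors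
and rates `αs + ε, αu - ε`. Hence the projector is a locally constant function of `Λ` on the
resolvent interval, and so constant because the interval is connected.
-/

open Matrix

noncomputable def euclNorm {d : ℕ} (v : Fin d → ℝ) : ℝ := Real.sqrt (∑ i, v i ^ 2)

def IsED {d : ℕ} (Φ : ℤ → ℤ → Matrix (Fin d) (Fin d) ℝ)
    (K αs αu : ℝ) (Ps : ℤ → Matrix (Fin d) (Fin d) ℝ) : Prop :=
  0 < K ∧ 0 < αs ∧ 0 < αu ∧
  (∀ n, Ps n * Ps n = Ps n) ∧
  (∀ n m, Ps n * Φ n m = Φ n m * Ps m) ∧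
  (∀ n m : ℤ, m ≤ n → ∀ v : Fin d → ℝ,
    euclNorm (Φ n m *ᵥ Ps m *ᵥ v) ≤ K * Real.exp (-αs * ((n : ℝ) - (m : ℝ))) * euclNorm v) ∧
  (∀ n m : ℤ, m ≤ n → ∀ v : Fin d → ℝ,
    euclNorm (Φ m n *ᵥ (1 - Ps n) *ᵥ v) ≤ K * Real.exp (-αu * ((n : ℝ) - (m : ℝ))) * euclNorm v)

section EuclNorm

variable {d : ℕ}

lemma euclNorm_eq_norm (v : Fin d → ℝ) : euclNorm v = ‖WithLp.toLp 2 v‖ := by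
  simp [euclNorm, EuclideanSpace.norm_eq]

lemma euclNorm_nonneg (v : Fin d → ℝ) : 0 ≤ euclNorm v := by
  rw [euclNorm_eq_norm]
  positivity

lemma euclNorm_smul (c : ℝ) (v : Fin d → ℝ) : euclNorm (c • v) = |c| * euclNorm v := by
  simp only [euclNorm_eq_norm, WithLp.toLp_smul, norm_smul, Real.norm_eq_abs]

lemma euclNorm_eq_zero {v : Fin d → ℝ} : euclNorm v = 0 ↔ v = 0 := by
  simp [euclNorm_eq_norm]

end EuclNorm

lemma Real.exp_neg_mul_le_one {α t : ℝ} (hα : 0 ≤ α) (ht : 0 ≤ t) : Real.exp (-α * t) ≤ 1 :=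
  Real.exp_le_one_iff.mpr (mul_nonpos_of_nonpos_of_nonneg (neg_nonpos.mpr hα) ht)

lemma nonpos_of_forall_le_mul_exp_neg {α C c : ℝ} (hα : 0 < α)
    (h : ∀ j : ℕ, c ≤ C * Real.exp (-α * j)) : c ≤ 0 := by
  have hlim : Filter.Tendsto (fun j : ℕ => C * Real.exp (-α * j)) Filter.atTop (nhds 0) := by
    simpa using (Real.tendsto_exp_atBot.comp <|
      (tendsto_natCast_atTop_atTop (R := ℝ)).const_mul_atTop_of_neg (neg_neg_of_pos hα)).const_mul C
  exact ge_of_tendsto' hlim h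

lemma Matrix.eq_of_mulVec_eq_self_of_mulVec_eq_zero {n R : Type*} [Fintype n] [Ring R]
    {P Q : Matrix n n R} (hP : IsIdempotentElem P)
    (hfix : ∀ v, P *ᵥ v = v → Q *ᵥ v = v) (hker : ∀ v, P *ᵥ v = 0 → Q *ᵥ v = 0) : P = Q := by
  refine Matrix.ext_iff_mulVec.mpr fun v => ?_
  have hPP : P *ᵥ (P *ᵥ v) = P *ᵥ v := by rw [mulVec_mulVec, hP.eq]
  have hPker : P *ᵥ (v - P *ᵥ v) = 0 := by rw [mulVec_sub, hPP, sub_self]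
  calc P *ᵥ v = Q *ᵥ (P *ᵥ v) + Q *ᵥ (v - P *ᵥ v) := by rw [hfix _ hPP, hker _ hPker, add_zero]
    _ = Q *ᵥ v := by rw [← mulVec_add, add_sub_cancel]

structure IsEvolutionFamily {R : Type*} [Monoid R] (M : ℤ → ℤ → R) : Prop where
  self_eq_one : ∀ n, M n n = 1
  mul_eq : ∀ n m k, M n m * M m k = M n k

lemma isEvolutionFamily_of_succ {R : Type*} [Monoid R] {A : ℤ → R} (hA : ∀ n, IsUnit (A n))
    {Φ : ℤ → ℤ → R} (hId : ∀ n, Φ n n = 1) (hstep : ∀ n m, Φ (n + 1) m = A n * Φ n m) :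
    IsEvolutionFamily Φ := by
  refine ⟨hId, fun n m k => ?_⟩
  suffices h : ∀ j : ℤ, Φ (m + j) m * Φ m k = Φ (m + j) k by simpa using h (n - m)
  intro j
  induction j using Int.induction_on with
  | zero => simp [hId]
  | succ i ih => rw [← add_assoc, hstep, hstep, mul_assoc, ih]
  | pred i ih =>
    apply (hA (m + (-i - 1))).mul_right_injective
    dsimp only
    rw [← mul_assoc, ← hstep, ← hstep, show m + (-i - 1) + 1 = m + -i by ring, ih]

noncomputable def expScale {d : ℕ} (Λ : ℝ) (M : ℤ → ℤ → Matrix (Fin d) (Fin d) ℝ) :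
    ℤ → ℤ → Matrix (Fin d) (Fin d) ℝ :=
  fun n m => Real.exp (-Λ * ((n : ℝ) - (m : ℝ))) • M n m

section Dichotomy

variable {d : ℕ} {M : ℤ → ℤ → Matrix (Fin d) (Fin d) ℝ}
  {K αs αu : ℝ} {P : ℤ → Matrix (Fin d) (Fin d) ℝ}

lemma expScale_expScale (μ ε : ℝ) (M : ℤ → ℤ → Matrix (Fin d) (Fin d) ℝ) :
    expScale ε (expScale μ M) = expScale (μ + ε) M := by
  ext1 n; ext1 m
  simp only [expScale, smul_smul, ← Real.exp_add]
  congr 2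
  ring

lemma IsEvolutionFamily.expScale (hM : IsEvolutionFamily M) (Λ : ℝ) :
    IsEvolutionFamily (expScale Λ M) where
  self_eq_one n := by simp [_root_.expScale, hM.self_eq_one]
  mul_eq n m k := by
    simp only [_root_.expScale, smul_mul_smul_comm, ← Real.exp_add, hM.mul_eq]
    congr 2
    ring

lemma euclNorm_expScale_mulVec (ε : ℝ) (n m : ℤ) (v : Fin d → ℝ) :
    euclNorm (expScale ε M n m *ᵥ v) = Real.exp (-ε * ((n : ℝ) - m)) * euclNorm (M n m *ᵥ v) := by
  rw [expScale, smul_mulVec, euclNorm_smul, abs_of_pos (Real.exp_pos _)]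

lemma IsED.shift (h : IsED M K αs αu P) (ε : ℝ) (hs : 0 < αs + ε) (hu : 0 < αu - ε) :
    IsED (expScale ε M) K (αs + ε) (αu - ε) P := by
  obtain ⟨hK, -, -, hidem, hcomm, hstab, hunst⟩ := h
  refine ⟨hK, hs, hu, hidem, fun n m => ?_, fun n m hmn v => ?_, fun n m hmn v => ?_⟩
  · simp only [expScale, mul_smul_comm, smul_mul_assoc, hcomm n m]
  · rw [euclNorm_expScale_mulVec]
    calc Real.exp (-ε * ((n : ℝ) - m)) * euclNorm (M n m *ᵥ P m *ᵥ v)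
        ≤ Real.exp (-ε * ((n : ℝ) - m)) * (K * Real.exp (-αs * ((n : ℝ) - m)) * euclNorm v) := by
          gcongr; exact hstab n m hmn v
      _ = K * Real.exp (-(αs + ε) * ((n : ℝ) - m)) * euclNorm v := by
          rw [neg_add, add_mul, Real.exp_add]; ring
  · rw [euclNorm_expScale_mulVec]
    calc Real.exp (-ε * ((m : ℝ) - n)) * euclNorm (M m n *ᵥ (1 - P n) *ᵥ v)
        ≤ Real.exp (-ε * ((m : ℝ) - n)) * (K * Real.exp (-αu * ((n : ℝ) - m)) * euclNorm v) := by
          gcongr; exact hunst n m hmn v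
      _ = K * Real.exp (-(αu - ε) * ((n : ℝ) - m)) * euclNorm v := by
          rw [show -(αu - ε) * ((n : ℝ) - m) = -ε * ((m : ℝ) - n) + -αu * ((n : ℝ) - m) by ring,
            Real.exp_add]
          ring

lemma IsED.euclNorm_stable_le (h : IsED M K αs αu P) {m n : ℤ} (hmn : m ≤ n)
    (v : Fin d → ℝ) : euclNorm (M n m *ᵥ P m *ᵥ v) ≤ K * euclNorm v := by
  obtain ⟨hK, hαs, -, -, -, hstab, -⟩ := h
  refine (hstab n m hmn v).trans (mul_le_mul_of_nonneg_right ?_ (euclNorm_nonneg v))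
  exact mul_le_of_le_one_right hK.le
    (Real.exp_neg_mul_le_one hαs.le (sub_nonneg.mpr (Int.cast_le.mpr hmn)))

lemma IsED.euclNorm_unstable_le (h : IsED M K αs αu P) {m n : ℤ} (hmn : m ≤ n)
    (v : Fin d → ℝ) : euclNorm (M m n *ᵥ (1 - P n) *ᵥ v) ≤ K * euclNorm v := by
  obtain ⟨hK, -, hαu, -, -, -, hunst⟩ := h
  refine (hunst n m hmn v).trans (mul_le_mul_of_nonneg_right ?_ (euclNorm_nonneg v))
  exact mul_le_of_le_one_right hK.le
    (Real.exp_neg_mul_le_one hαu.le (sub_nonneg.mpr (Int.cast_le.mpr hmn)))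

lemma IsED.mulVec_eq_self_iff (hM : IsEvolutionFamily M) (h : IsED M K αs αu P) (n : ℤ)
    (v : Fin d → ℝ) : P n *ᵥ v = v ↔ ∃ C, ∀ k, n ≤ k → euclNorm (M k n *ᵥ v) ≤ C := by
  refine ⟨fun hv => ⟨K * euclNorm v, fun k hk => ?_⟩, fun ⟨C, hC⟩ => ?_⟩
  · simpa only [hv] using h.euclNorm_stable_le hk v
  obtain ⟨hK, -, hαu, -, hcomm, -, hunst⟩ := h
  suffices hdecay : ∀ j : ℕ, euclNorm (v - P n *ᵥ v) ≤ K * C * Real.exp (-αu * j) by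
    have h0 := nonpos_of_forall_le_mul_exp_neg hαu hdecay
    exact (sub_eq_zero.mp (euclNorm_eq_zero.mp (h0.antisymm (euclNorm_nonneg _)))).symm
  intro j
  have hk : n ≤ n + j := by omega
  -- The unstable part of `v` is pulled back from that of `M (n + j) n v`, contracting by `e^{-αu j}`.
  have hpull : M n (n + j) *ᵥ (1 - P (n + j)) *ᵥ M (n + j) n *ᵥ v = v - P n *ᵥ v := by
    rw [mulVec_mulVec, mulVec_mulVec, mul_assoc, sub_mul, one_mul, hcomm, mul_sub, hM.mul_eq,
      ← mul_assoc, hM.mul_eq, hM.self_eq_one, one_mul, sub_mulVec, one_mulVec]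
  calc euclNorm (v - P n *ᵥ v)
      ≤ K * Real.exp (-αu * j) * euclNorm (M (n + j) n *ᵥ v) := by
        simpa only [hpull, Int.cast_add, Int.cast_natCast, add_sub_cancel_left]
          using hunst (n + j) n hk (M (n + j) n *ᵥ v)
    _ ≤ K * Real.exp (-αu * j) * C := by gcongr; exact hC _ hk
    _ = K * C * Real.exp (-αu * j) := by ring

lemma IsED.mulVec_eq_zero_iff (hM : IsEvolutionFamily M) (h : IsED M K αs αu P) (n : ℤ)
    (v : Fin d → ℝ) : P n *ᵥ v = 0 ↔ ∃ C, ∀ k, k ≤ n → euclNorm (M k n *ᵥ v) ≤ C := by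
  refine ⟨fun hv => ⟨K * euclNorm v, fun k hk => ?_⟩, fun ⟨C, hC⟩ => ?_⟩
  · simpa only [sub_mulVec, one_mulVec, hv, sub_zero] using h.euclNorm_unstable_le hk v
  obtain ⟨hK, hαs, -, -, hcomm, hstab, -⟩ := h
  suffices hdecay : ∀ j : ℕ, euclNorm (P n *ᵥ v) ≤ K * C * Real.exp (-αs * j) from
    euclNorm_eq_zero.mp ((nonpos_of_forall_le_mul_exp_neg hαs hdecay).antisymm
      (euclNorm_nonneg _))
  intro j
  have hk : n - j ≤ n := by omega
  have hpush : M n (n - j) *ᵥ P (n - j) *ᵥ M (n - j) n *ᵥ v = P n *ᵥ v := by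
    rw [mulVec_mulVec, mulVec_mulVec, ← hcomm, mul_assoc, hM.mul_eq, hM.self_eq_one, mul_one]
  calc euclNorm (P n *ᵥ v)
      ≤ K * Real.exp (-αs * j) * euclNorm (M (n - j) n *ᵥ v) := by
        simpa only [hpush, Int.cast_sub, Int.cast_natCast, sub_sub_cancel]
          using hstab n (n - j) hk (M (n - j) n *ᵥ v)
    _ ≤ K * Real.exp (-αs * j) * C := by gcongr; exact hC _ hk
    _ = K * C * Real.exp (-αs * j) := by ring

lemma IsED.proj_unique (hM : IsEvolutionFamily M) (h : IsED M K αs αu P)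
    {K' αs' αu' : ℝ} {Q : ℤ → Matrix (Fin d) (Fin d) ℝ} (h' : IsED M K' αs' αu' Q) : P = Q := by
  funext n
  refine Matrix.eq_of_mulVec_eq_self_of_mulVec_eq_zero (h.2.2.2.1 n) (fun v hv => ?_) fun v hv => ?_
  · exact (h'.mulVec_eq_self_iff hM n v).mpr ((h.mulVec_eq_self_iff hM n v).mp hv)
  · exact (h'.mulVec_eq_zero_iff hM n v).mpr ((h.mulVec_eq_zero_iff hM n v).mp hv)

lemma IsED.proj_eq_of_abs_sub_lt {Φ : ℤ → ℤ → Matrix (Fin d) (Fin d) ℝ}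
    (hΦ : IsEvolutionFamily Φ) {μ ν : ℝ} (h : IsED (expScale μ Φ) K αs αu P)
    {K' αs' αu' : ℝ} {Q : ℤ → Matrix (Fin d) (Fin d) ℝ} (h' : IsED (expScale ν Φ) K' αs' αu' Q)
    (hν : |ν - μ| < min αs αu) : P = Q := by
  obtain ⟨hs, hu⟩ := lt_min_iff.mp hν
  have hshift := h.shift (ν - μ) (by linarith [neg_abs_le (ν - μ)])
    (by linarith [le_abs_self (ν - μ)])
  rw [expScale_expScale, add_sub_cancel] at hshift
  exact hshift.proj_unique (hΦ.expScale ν) h'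

lemma IsED.proj_eq_of_isPreconnected {Φ : ℤ → ℤ → Matrix (Fin d) (Fin d) ℝ}
    (hΦ : IsEvolutionFamily Φ) {s : Set ℝ} (hs : IsPreconnected s)
    (hED : ∀ Λ ∈ s, ∃ (K αs αu : ℝ) (P : ℤ → Matrix (Fin d) (Fin d) ℝ),
      IsED (expScale Λ Φ) K αs αu P)
    {Λ₁ Λ₂ K₁ αs₁ αu₁ K₂ αs₂ αu₂ : ℝ} {P₁ P₂ : ℤ → Matrix (Fin d) (Fin d) ℝ}
    (hΛ₁ : Λ₁ ∈ s) (hΛ₂ : Λ₂ ∈ s)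
    (h₁ : IsED (expScale Λ₁ Φ) K₁ αs₁ αu₁ P₁) (h₂ : IsED (expScale Λ₂ Φ) K₂ αs₂ αu₂ P₂) :
    P₁ = P₂ := by
  choose K αs αu P hP using hED
  let proj : s → ℤ → Matrix (Fin d) (Fin d) ℝ := fun Λ => P Λ Λ.2
  have hloc : IsLocallyConstant proj := by
    refine (IsLocallyConstant.iff_eventually_eq proj).mpr fun μ => ?_
    have hpos : 0 < min (αs μ μ.2) (αu μ μ.2) := lt_min (hP μ μ.2).2.1 (hP μ μ.2).2.2.1
    filter_upwards [Metric.ball_mem_nhds μ hpos] with ν hν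
    exact ((hP μ μ.2).proj_eq_of_abs_sub_lt hΦ (hP ν ν.2) hν).symm
  have := isPreconnected_iff_preconnectedSpace.mp hs
  calc P₁ = proj ⟨Λ₁, hΛ₁⟩ := h₁.proj_unique (hΦ.expScale Λ₁) (hP Λ₁ hΛ₁)
    _ = proj ⟨Λ₂, hΛ₂⟩ := hloc.apply_eq_of_preconnectedSpace _ _
    _ = P₂ := (hP Λ₂ hΛ₂).proj_unique (hΦ.expScale Λ₂) h₂

end Dichotomy

/-- if the scaled equation `w_{n+1} = e^{-Λ}Aₙwₙ` has an
exponential dichotomy for every `Λ` in the open (resolvent) interval `(a,b)`,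
then the dichotomy projectors are constant on `(a,b)`. -/
theorem stmt16 {d : ℕ} (A : ℤ → Matrix (Fin d) (Fin d) ℝ) (hA : ∀ n, IsUnit (A n))
    (Φ : ℤ → ℤ → Matrix (Fin d) (Fin d) ℝ)
    (hId : ∀ n, Φ n n = 1) (hstep : ∀ n m, Φ (n + 1) m = A n * Φ n m)
    (a b : ℝ)
    (hres : ∀ Λ ∈ Set.Ioo a b, ∃ (K αs αu : ℝ) (Ps : ℤ → Matrix (Fin d) (Fin d) ℝ),
      IsED (fun n m => Real.exp (-Λ * ((n : ℝ) - (m : ℝ))) • Φ n m) K αs αu Ps)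
    (Λ₁ Λ₂ : ℝ) (hΛ₁ : Λ₁ ∈ Set.Ioo a b) (hΛ₂ : Λ₂ ∈ Set.Ioo a b)
    (K₁ αs₁ αu₁ K₂ αs₂ αu₂ : ℝ)
    (Ps₁ Ps₂ : ℤ → Matrix (Fin d) (Fin d) ℝ)
    (hED₁ : IsED (fun n m => Real.exp (-Λ₁ * ((n : ℝ) - (m : ℝ))) • Φ n m) K₁ αs₁ αu₁ Ps₁)
    (hED₂ : IsED (fun n m => Real.exp (-Λ₂ * ((n : ℝ) - (m : ℝ))) • Φ n m) K₂ αs₂ αu₂ Ps₂) :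
    ∀ n : ℤ, Ps₁ n = Ps₂ n :=
  congrFun <| IsED.proj_eq_of_isPreconnected (isEvolutionFamily_of_succ hA hId hstep)
    isPreconnected_Ioo hres hΛ₁ hΛ₂ hED₁ hED₂
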